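/- Let G be a tournament of order n with diameter 2, and suppose there is a constant 0 < ε < 1 with s(x,y) ≤ εn for all pairs of distinct vertices x, y, where s(x,y) = |{z : χ(x,z) = χ(y,z)}|. Then the metric dimension of G is at most max(−2/log₂ ε, 2) · log₂ n, for n sufficiently large: there exists a set W of k = ⌈max(−2/log₂ ε, 2) · log₂ n⌉ vertices such that for every pair x ≠ y some w ∈ W has d(w,x) ≠ d(w,y). -/

import Mathlib

/-- A directed walk of length `n` from `u` to `v` along the arc relation `A`. -/
def IsDWalk {V : Type*} (A : V → V → Prop) {n : ℕ} (f : Fin (n + 1) → V) (u v : V) : Prop :=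
  f 0 = u ∧ f (Fin.last n) = v ∧ ∀ i : Fin n, A (f i.castSucc) (f i.succ)

/-- Directed distance: the length of a shortest directed path from `u` to `v`,
`⊤` (infinity) if there is no directed path. -/
noncomputable def ddist {V : Type*} (A : V → V → Prop) (u v : V) : ℕ∞ :=
  sInf {m : ℕ∞ | ∃ (n : ℕ) (f : Fin (n + 1) → V), IsDWalk A f u v ∧ m = (n : ℕ∞)}

/-! A random `k`-tuple of vertices lies entirely inside the sameness set `S(x, y)` of a fixed
pair with probability at most `ε ^ k`; there are fewer than `n ^ 2` pairs and `n ^ 2 ε ^ k ≤ 1`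
by the choice of `k`, so some tuple meets the complement of every `S(x, y)`. In a tournament a
vertex `w ∉ S(x, y)` other than `x`, `y` is an out-neighbour of exactly one of them, hence at
distance `1` from one and at least `2` from the other; `x` and `y` resolve the pair trivially. -/

open Finset

section ddist

variable {V : Type*} {A : V → V → Prop} {u v : V}

theorem exists_isDWalk_length_zero_iff : (∃ f : Fin 1 → V, IsDWalk A f u v) ↔ u = v :=
  ⟨fun ⟨_, hu, hv, _⟩ => hu.symm.trans hv, fun h => ⟨fun _ => u, rfl, h, fun i => i.elim0⟩⟩

theorem exists_isDWalk_length_one_iff : (∃ f : Fin 2 → V, IsDWalk A f u v) ↔ A u v := by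
  refine ⟨fun ⟨f, hu, hv, hA⟩ => hu ▸ hv ▸ hA 0, fun h => ⟨![u, v], rfl, rfl, fun i => ?_⟩⟩
  rwa [Fin.fin_one_eq_zero i]

theorem ddist_le_natCast_iff {m : ℕ} :
    ddist A u v ≤ m ↔ ∃ n ≤ m, ∃ f : Fin (n + 1) → V, IsDWalk A f u v := by
  set s := {m : ℕ∞ | ∃ (n : ℕ) (f : Fin (n + 1) → V), IsDWalk A f u v ∧ m = n}
  change sInf s ≤ m ↔ _
  constructor
  · intro h
    have hne : s.Nonempty := by
      by_contra hempty
      rw [Set.not_nonempty_iff_eq_empty.1 hempty, sInf_empty] at h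
      exact ENat.natCast_ne_top m (top_le_iff.1 h)
    obtain ⟨n, f, hf, hn⟩ := csInf_mem hne
    exact ⟨n, by rw [hn] at h; exact_mod_cast h, f, hf⟩
  · rintro ⟨n, hn, f, hf⟩
    exact (sInf_le (show (n : ℕ∞) ∈ s from ⟨n, f, hf, rfl⟩)).trans (by exact_mod_cast hn)

theorem ddist_eq_zero_iff : ddist A u v = 0 ↔ u = v := by
  rw [← nonpos_iff_eq_zero, ← Nat.cast_zero, ddist_le_natCast_iff,
    ← exists_isDWalk_length_zero_iff (A := A)]
  simp

theorem ddist_le_one_iff : ddist A u v ≤ 1 ↔ u = v ∨ A u v := by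
  rw [← Nat.cast_one, ddist_le_natCast_iff, ← exists_isDWalk_length_zero_iff (A := A),
    ← exists_isDWalk_length_one_iff (A := A)]
  simp [Nat.le_one_iff_eq_zero_or_eq_one, or_and_right, exists_or]

@[simp]
theorem ddist_self : ddist A u u = 0 :=
  ddist_eq_zero_iff.2 rfl

theorem ddist_ne_of_not_iff (htour : ∀ x y : V, x ≠ y → Xor (A x y) (A y x)) {x y w : V}
    (hxy : x ≠ y) (hw : ¬(A x w ↔ A y w)) : ddist A w x ≠ ddist A w y := by
  by_cases hwx : w = x
  · subst hwx
    rw [ddist_self]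
    exact fun h => hxy (ddist_eq_zero_iff.1 h.symm)
  by_cases hwy : w = y
  · subst hwy
    rw [ddist_self]
    exact fun h => hxy (ddist_eq_zero_iff.1 h).symm
  have hle : ∀ z, z ≠ w → (ddist A w z ≤ 1 ↔ ¬A z w) := fun z hz => by
    rw [ddist_le_one_iff, or_iff_right (Ne.symm hz)]
    rcases htour z w hz with h | h <;> tauto
  intro heq
  exact hw (not_iff_not.1 <| (hle x (Ne.symm hwx)).symm.trans (heq ▸ hle y (Ne.symm hwy)))

end ddist

theorem exists_tuple_forall_exists_notMem {ι V : Type*} [Fintype V] [DecidableEq V]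
    (P : Finset ι) (S : ι → Finset V) (b : ℝ) (k : ℕ) (hS : ∀ p ∈ P, (#(S p) : ℝ) ≤ b)
    (hcount : #P * b ^ k < Fintype.card V ^ k) :
    ∃ f : Fin k → V, ∀ p ∈ P, ∃ i, f i ∉ S p := by
  set bad := P.biUnion fun p => Fintype.piFinset fun _ : Fin k => S p
  have hbad : #bad < #(univ : Finset (Fin k → V)) := by
    have : (#bad : ℝ) ≤ #P * b ^ k :=
      calc (#bad : ℝ) ≤ ∑ p ∈ P, (#(S p) : ℝ) ^ k := by
            exact_mod_cast card_biUnion_le.trans (by simp)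
        _ ≤ ∑ _p ∈ P, b ^ k :=
            sum_le_sum fun p hp => pow_le_pow_left₀ (Nat.cast_nonneg _) (hS p hp) k
        _ = #P * b ^ k := by rw [sum_const, nsmul_eq_mul]
    have hcard : ((#(univ : Finset (Fin k → V)) : ℕ) : ℝ) = Fintype.card V ^ k := by simp
    exact_mod_cast (this.trans_lt hcount).trans_eq hcard.symm
  obtain ⟨f, -, hf⟩ := exists_mem_notMem_of_card_lt_card hbad
  refine ⟨f, fun p hp => ?_⟩
  by_contra! h
  exact hf (mem_biUnion.2 ⟨p, hp, Fintype.mem_piFinset.2 h⟩)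

theorem sq_mul_pow_le_one_of_logb_le {ε x : ℝ} {k : ℕ} (hε0 : 0 < ε) (hε1 : ε < 1) (hx : 0 < x)
    (hk : -2 / Real.logb 2 ε * Real.logb 2 x ≤ k) : x ^ 2 * ε ^ k ≤ 1 := by
  have hL : Real.logb 2 ε < 0 := Real.logb_neg one_lt_two hε0 hε1
  have hkL : k * Real.logb 2 ε ≤ -2 * Real.logb 2 x := by
    have := mul_le_mul_of_nonpos_right hk hL.le
    rwa [div_mul_eq_mul_div, div_mul_cancel₀ _ hL.ne] at this
  rw [← Real.logb_nonpos_iff (b := 2) one_lt_two (by positivity),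
    Real.logb_mul (by positivity) (by positivity), Real.logb_pow, Real.logb_pow]
  push_cast
  linarith

/-- Let `0 < ε < 1` be a constant. For `n` sufficiently large: if `G` is a tournament of
order `n` with diameter 2 such that the sameness set of every pair of distinct vertices
has size at most `ε * n`, then the metric dimension of `G` is at most
`max(-2 / log₂ ε, 2) · log₂ n`: some set `W` of at most `⌈max(-2 / log₂ ε, 2) · log₂ n⌉`
vertices resolves every pair. -/
theorem quasirandom_tournament_metric_dim (ε : ℝ) (hε0 : 0 < ε) (hε1 : ε < 1) :
    ∃ n₀ : ℕ, ∀ n : ℕ, n₀ ≤ n → ∀ (V : Type) [Fintype V], Fintype.card V = n →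
      ∀ A : V → V → Prop, Irreflexive A →
        (∀ x y : V, x ≠ y → Xor' (A x y) (A y x)) →
        (∀ u v : V, u ≠ v → ddist A u v ≤ 2) →
        (∀ x y : V, x ≠ y → (Nat.card {z : V // A x z ↔ A y z} : ℝ) ≤ ε * n) →
        ∃ W : Finset V,
          W.card ≤ ⌈max (-2 / Real.logb 2 ε) 2 * Real.logb 2 (n : ℝ)⌉₊ ∧
          ∀ x y : V, x ≠ y → ∃ w ∈ W, ddist A w x ≠ ddist A w y := by
  classical
  refine ⟨1, fun n hn V _ hcard A _ htour _ hsame => ?_⟩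
  set k := ⌈max (-2 / Real.logb 2 ε) 2 * Real.logb 2 (n : ℝ)⌉₊
  have hn0 : (0 : ℝ) < n := by exact_mod_cast hn
  have hk : (n : ℝ) ^ 2 * ε ^ k ≤ 1 :=
    sq_mul_pow_le_one_of_logb_le hε0 hε1 hn0 <|
      (mul_le_mul_of_nonneg_right (le_max_left _ _)
        (Real.logb_nonneg one_lt_two (by exact_mod_cast hn))).trans (Nat.le_ceil _)
  have hpairs : (#(univ.offDiag : Finset (V × V)) : ℝ) < n ^ 2 := by
    rw [offDiag_card, card_univ, hcard, Nat.cast_sub (Nat.le_mul_self n)]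
    push_cast
    linarith
  have hcount : (#(univ.offDiag : Finset (V × V)) : ℝ) * (ε * n) ^ k < Fintype.card V ^ k :=
    calc _ = #(univ.offDiag : Finset (V × V)) * ε ^ k * n ^ k := by ring
      _ < n ^ 2 * ε ^ k * n ^ k := by gcongr
      _ ≤ 1 * n ^ k := by gcongr
      _ = Fintype.card V ^ k := by rw [one_mul, hcard]
  have hsame' : ∀ p ∈ (univ.offDiag : Finset (V × V)),
      (#(univ.filter fun z => A p.1 z ↔ A p.2 z) : ℝ) ≤ ε * n := fun p hp => by
    simpa [Nat.card_eq_fintype_card, Fintype.card_subtype] using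
      hsame p.1 p.2 (mem_offDiag.1 hp).2.2
  obtain ⟨f, hf⟩ := exists_tuple_forall_exists_notMem _ _ _ k hsame' hcount
  refine ⟨univ.image f, card_image_le.trans (by simp), fun x y hxy => ?_⟩
  obtain ⟨i, hi⟩ := hf (x, y) (by simpa using hxy)
  exact ⟨f i, mem_image_of_mem f (mem_univ i), ddist_ne_of_not_iff htour hxy (by simpa using hi)⟩
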